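/- arXiv:1201.0874 — 5 statements merged into one kernel-verified Lean document; each statement's English description precedes it below -/
import Mathlib

section
/- A closed term t of the λ-calculus with shift and reset is stuck (i.e., t is not a value and t admits no reduction step) if and only if t = E[shift k. s] for some pure evaluation context E, variable k, and term s. -/
namespace LamS

/-- Terms of the λ-calculus with shift and reset, in de Bruijn representation.
    `lam` and `shift` bind variable 0. -/
inductive Tm : Type
  | var : ℕ → Tm
  | lam : Tm → Tm
  | app : Tm → Tm → Tm
  | shift : Tm → Tm
  | reset : Tm → Tm
  deriving DecidableEq

open Tm

/-- Lift (shift up) free de Bruijn indices `≥ c` by `d`. -/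
def liftT (d : ℕ) : ℕ → Tm → Tm
  | c, var n => if n < c then var n else var (n + d)
  | c, lam t => lam (liftT d (c+1) t)
  | c, app a b => app (liftT d c a) (liftT d c b)
  | c, shift t => shift (liftT d (c+1) t)
  | c, reset t => reset (liftT d c t)

/-- Capture-avoiding substitution `t[j := s]` (de Bruijn). -/
def substT : ℕ → Tm → Tm → Tm
  | j, s, var n => if n = j then liftT j 0 s else if j < n then var (n-1) else var n
  | j, s, lam t => lam (substT (j+1) s t)
  | j, s, app a b => app (substT j s a) (substT j s b)
  | j, s, shift t => shift (substT (j+1) s t)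
  | j, s, reset t => reset (substT j s t)

/-- Values are λ-abstractions. -/
def IsValue (t : Tm) : Prop := ∃ b, t = lam b

/-- All free variables are `< n`. -/
def ClosedUnder : ℕ → Tm → Prop
  | n, var m => m < n
  | n, lam t => ClosedUnder (n+1) t
  | n, app a b => ClosedUnder n a ∧ ClosedUnder n b
  | n, shift t => ClosedUnder (n+1) t
  | n, reset t => ClosedUnder n t

def Closed (t : Tm) : Prop := ClosedUnder 0 t

/-- Pure evaluation contexts, interpreted inside-out:
    `appV b E` is `E[(λ.b) []]` and `appL E t` is `E[[] t]`. -/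
inductive PCtx : Type
  | hole : PCtx
  | appV : Tm → PCtx → PCtx
  | appL : PCtx → Tm → PCtx
  deriving DecidableEq

def PCtx.plug : PCtx → Tm → Tm
  | .hole, t => t
  | .appV b E, t => E.plug (app (lam b) t)
  | .appL E s, t => E.plug (app t s)

def PCtx.liftC (d : ℕ) : ℕ → PCtx → PCtx
  | _, .hole => .hole
  | c, .appV b E => .appV (liftT d (c+1) b) (PCtx.liftC d c E)
  | c, .appL E s => .appL (PCtx.liftC d c E) (liftT d c s)

/-- Composition of pure contexts: `(E.comp E').plug t = E.plug (E'.plug t)`. -/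
def PCtx.comp : PCtx → PCtx → PCtx
  | E, .hole => E
  | E, .appV b E' => .appV b (E.comp E')
  | E, .appL E' s => .appL (E.comp E') s

/-- The captured delimited continuation `λx.⟨E[x]⟩`. -/
def contOf (E : PCtx) : Tm := lam (reset ((PCtx.liftC 1 0 E).plug (var 0)))

/-- Call-by-value evaluation contexts, interpreted inside-out. -/
inductive ECtx : Type
  | hole : ECtx
  | appV : Tm → ECtx → ECtx
  | appL : ECtx → Tm → ECtx
  | resetC : ECtx → ECtx
  deriving DecidableEq

def ECtx.plug : ECtx → Tm → Tm
  | .hole, t => t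
  | .appV b F, t => F.plug (app (lam b) t)
  | .appL F s, t => F.plug (app t s)
  | .resetC F, t => F.plug (reset t)

def ClosedECtx : ECtx → Prop
  | .hole => True
  | .appV b F => ClosedUnder 1 b ∧ ClosedECtx F
  | .appL F s => ClosedECtx F ∧ Closed s
  | .resetC F => ClosedECtx F

/-- One-step reduction of λ_S. -/
inductive Red : Tm → Tm → Prop
  | beta (F : ECtx) (t v : Tm) (hv : IsValue v) :
      Red (F.plug (app (lam t) v)) (F.plug (substT 0 v t))
  | cap (F : ECtx) (E : PCtx) (t : Tm) :
      Red (F.plug (reset (E.plug (shift t)))) (F.plug (reset (substT 0 (contOf E) t)))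
  | res (F : ECtx) (v : Tm) (hv : IsValue v) :
      Red (F.plug (reset v)) (F.plug v)

def RedStar : Tm → Tm → Prop := Relation.ReflTransGen Red

/-- A term is stuck if it is not a value and cannot reduce. -/
def Stuck (t : Tm) : Prop := ¬ IsValue t ∧ ∀ u, ¬ Red t u

/-- Evaluation: reduce to an irreducible term. -/
def Eval (t t' : Tm) : Prop := RedStar t t' ∧ ∀ u, ¬ Red t' u

def IsRedex (r : Tm) : Prop :=
  (∃ t v, IsValue v ∧ r = app (lam t) v) ∨
  (∃ E s, r = reset (PCtx.plug E (shift s))) ∨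
  (∃ v, IsValue v ∧ r = reset v)

/-- Labels of the LTS. -/
inductive Label : Type
  | tau : Label
  | val : Tm → Label
  | ctx : PCtx → Label

/-- The labelled transition system for λ_S. -/
inductive Step : Tm → Label → Tm → Prop
  | beta {t v : Tm} (hv : IsValue v) :
      Step (app (lam t) v) .tau (substT 0 v t)
  | resetVal {v : Tm} (hv : IsValue v) :
      Step (reset v) .tau v
  | appL {t0 t0' t1 : Tm} :
      Step t0 .tau t0' → Step (app t0 t1) .tau (app t0' t1)
  | appR {v t t' : Tm} (hv : IsValue v) :
      Step t .tau t' → Step (app v t) .tau (app v t')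
  | resetT {t t' : Tm} :
      Step t .tau t' → Step (reset t) .tau (reset t')
  | resetCap {t t' : Tm} :
      Step t (.ctx .hole) t' → Step (reset t) .tau t'
  | lamApp {t v : Tm} (hv : IsValue v) :
      Step (lam t) (.val v) (substT 0 v t)
  | shiftCap {t : Tm} (E : PCtx) :
      Step (shift t) (.ctx E) (reset (substT 0 (contOf E) t))
  | capL {t0 t0' t1 : Tm} {E : PCtx} :
      Step t0 (.ctx (.appL E t1)) t0' → Step (app t0 t1) (.ctx E) t0'
  | capR {b t t' : Tm} {E : PCtx} :
      Step t (.ctx (.appV b E)) t' → Step (app (lam b) t) (.ctx E) t'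

def TauStar : Tm → Tm → Prop := Relation.ReflTransGen (fun a b => Step a .tau b)

/-- Weak delay transition: τ-steps, then an `l`-step if `l ≠ τ`. -/
def Weak (t : Tm) (l : Label) (t' : Tm) : Prop :=
  match l with
  | .tau => TauStar t t'
  | _ => ∃ u, TauStar t u ∧ Step u l t'

/-- Applicative simulation. -/
def IsSim (R : Tm → Tm → Prop) : Prop :=
  ∀ ⦃t0 t1⦄, R t0 t1 → ∀ ⦃l t0'⦄, Step t0 l t0' →
    ∃ t1', Weak t1 l t1' ∧ R t0' t1'

def IsBisim (R : Tm → Tm → Prop) : Prop := IsSim R ∧ IsSim (flip R)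

/-- Applicative bisimilarity: the largest applicative bisimulation. -/
def Bisim (t0 t1 : Tm) : Prop := ∃ R, IsBisim R ∧ R t0 t1

/-- Big-step applicative simulation. -/
def IsBigSim (R : Tm → Tm → Prop) : Prop :=
  ∀ ⦃t0 t1⦄, R t0 t1 → ∀ ⦃l t0'⦄, l ≠ Label.tau → Weak t0 l t0' →
    ∃ t1', Weak t1 l t1' ∧ R t0' t1'

def IsBigBisim (R : Tm → Tm → Prop) : Prop := IsBigSim R ∧ IsBigSim (flip R)

/-- Big-step applicative bisimilarity. -/
def BigBisim (t0 t1 : Tm) : Prop := ∃ R, IsBigBisim R ∧ R t0 t1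

/-- General contexts. -/
inductive Ctx : Type
  | hole : Ctx
  | lam : Ctx → Ctx
  | appL : Ctx → Tm → Ctx
  | appR : Tm → Ctx → Ctx
  | shift : Ctx → Ctx
  | reset : Ctx → Ctx

/-- Plugging a term in a general context (free variables may be captured). -/
def Ctx.plug : Ctx → Tm → Tm
  | .hole, t => t
  | .lam C, t => Tm.lam (C.plug t)
  | .appL C s, t => Tm.app (C.plug t) s
  | .appR s C, t => Tm.app s (C.plug t)
  | .shift C, t => Tm.shift (C.plug t)
  | .reset C, t => Tm.reset (C.plug t)

def CtxClosedUnder : ℕ → Ctx → Prop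
  | _, .hole => True
  | n, .lam C => CtxClosedUnder (n+1) C
  | n, .appL C s => CtxClosedUnder n C ∧ ClosedUnder n s
  | n, .appR s C => ClosedUnder n s ∧ CtxClosedUnder n C
  | n, .shift C => CtxClosedUnder (n+1) C
  | n, .reset C => CtxClosedUnder n C

def ClosedCtx (C : Ctx) : Prop := CtxClosedUnder 0 C

def EvalsToValue (t : Tm) : Prop := ∃ v, IsValue v ∧ Eval t v

def EvalsToStuck (t : Tm) : Prop := ∃ s, Stuck s ∧ Eval t s

/-- Contextual equivalence on closed terms. -/
def CtxEquiv (t0 t1 : Tm) : Prop :=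
  ∀ C : Ctx, ClosedCtx C →
    (EvalsToValue (C.plug t0) ↔ EvalsToValue (C.plug t1)) ∧
    (EvalsToStuck (C.plug t0) ↔ EvalsToStuck (C.plug t1))

/-- Contextual equivalence restricted to evaluation contexts. -/
def ECtxEquiv (t0 t1 : Tm) : Prop :=
  ∀ F : ECtx, ClosedECtx F →
    (EvalsToValue (F.plug t0) ↔ EvalsToValue (F.plug t1)) ∧
    (EvalsToStuck (F.plug t0) ↔ EvalsToStuck (F.plug t1))

/-- Lifting a substitution under a binder. -/
def liftSub (σ : ℕ → Tm) : ℕ → Tm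
  | 0 => var 0
  | n+1 => liftT 1 0 (σ n)

/-- Apply a substitution to all free variables of a term. -/
def applySub (σ : ℕ → Tm) : Tm → Tm
  | var n => σ n
  | lam t => lam (applySub (liftSub σ) t)
  | app a b => app (applySub σ a) (applySub σ b)
  | shift t => shift (applySub (liftSub σ) t)
  | reset t => reset (applySub σ t)

/-- A closing substitution maps every variable to a closed value. -/
def ClosingSub (σ : ℕ → Tm) : Prop := ∀ n, IsValue (σ n) ∧ Closed (σ n)

/-- Open extension of a relation on closed terms. -/
def OpenExt (R : Tm → Tm → Prop) (t0 t1 : Tm) : Prop :=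
  ∀ σ, ClosingSub σ → R (applySub σ t0) (applySub σ t1)

/-- Howe's closure of applicative bisimilarity (compatible refinement rules inlined). -/
inductive Howe : Tm → Tm → Prop
  | base {t0 t1} : OpenExt Bisim t0 t1 → Howe t0 t1
  | right {t0 t2 t1} : Howe t0 t2 → OpenExt Bisim t2 t1 → Howe t0 t1
  | compVar (n : ℕ) : Howe (var n) (var n)
  | compLam {t0 t1} : Howe t0 t1 → Howe (lam t0) (lam t1)
  | compApp {a0 a1 b0 b1} : Howe a0 a1 → Howe b0 b1 → Howe (app a0 b0) (app a1 b1)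
  | compShift {t0 t1} : Howe t0 t1 → Howe (shift t0) (shift t1)
  | compReset {t0 t1} : Howe t0 t1 → Howe (reset t0) (reset t1)

/-- Howe's closure restricted to closed terms. -/
def HoweC (t0 t1 : Tm) : Prop := Closed t0 ∧ Closed t1 ∧ Howe t0 t1

/-- Extension of Howe's closure to pure contexts. -/
inductive PCtxHowe : PCtx → PCtx → Prop
  | hole : PCtxHowe .hole .hole
  | appV {b0 b1 E0 E1} : Howe b0 b1 → PCtxHowe E0 E1 → PCtxHowe (.appV b0 E0) (.appV b1 E1)
  | appL {E0 E1 t0 t1} : PCtxHowe E0 E1 → Howe t0 t1 → PCtxHowe (.appL E0 t0) (.appL E1 t1)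

/-- Extension of Howe's closure to labels. -/
def LabHowe : Label → Label → Prop
  | .tau, .tau => True
  | .val v0, .val v1 => Closed v0 ∧ Closed v1 ∧ Howe v0 v1
  | .ctx E0, .ctx E1 => PCtxHowe E0 E1
  | _, _ => False

/-- ω = λx. x x -/
def omegaTm : Tm := lam (app (var 0) (var 0))

/-- Ω = ω ω, the standard diverging term. -/
def OmegaTm : Tm := app omegaTm omegaTm

/-- Every τ-reachable term can do a τ-step: only infinite τ-sequences. -/
def Diverges (t : Tm) : Prop := ∀ u, TauStar t u → ∃ u', Step u .tau u'

/-- No weak non-τ transition. -/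
def NoObs (t : Tm) : Prop := ∀ l t', l ≠ Label.tau → ¬ Weak t l t'


/-! A closed non-value either is a shift under a pure context or contains a redex in
evaluation position (progress, by induction on the term). Conversely, plugging a term into an
evaluation context can only produce a shift under a pure context if the term is itself a value
or already of that shape, and no redex is either. -/

/-- `E[Sk.s]` for a pure context `E`, read outside-in. -/
inductive ShiftInPCtx : Tm → Prop
  | shift (s : Tm) : ShiftInPCtx (shift s)
  | appR (b u : Tm) : ShiftInPCtx u → ShiftInPCtx (app (lam b) u)
  | appL (u s : Tm) : ShiftInPCtx u → ShiftInPCtx (app u s)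

theorem PCtx.comp_plug (E E' : PCtx) (t : Tm) :
    (E.comp E').plug t = E.plug (E'.plug t) := by
  induction E' generalizing t with
  | hole => rfl
  | appV b E' ih => simp only [PCtx.comp, PCtx.plug, ih]
  | appL E' s ih => simp only [PCtx.comp, PCtx.plug, ih]

theorem ShiftInPCtx.pctx_plug (E : PCtx) {t : Tm} (h : ShiftInPCtx t) :
    ShiftInPCtx (E.plug t) := by
  induction E generalizing t with
  | hole => exact h
  | appV b E ih => exact ih (.appR _ _ h)
  | appL E s ih => exact ih (.appL _ _ h)

theorem shiftInPCtx_iff {t : Tm} : ShiftInPCtx t ↔ ∃ (E : PCtx) (s : Tm), t = E.plug (shift s) := by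
  refine ⟨fun h => ?_, fun ⟨E, s, ht⟩ => ht ▸ (ShiftInPCtx.shift s).pctx_plug E⟩
  induction h with
  | shift s => exact ⟨.hole, s, rfl⟩
  | appR b u _ ih =>
    obtain ⟨E, s, rfl⟩ := ih
    exact ⟨(PCtx.appV b .hole).comp E, s, by rw [PCtx.comp_plug]; rfl⟩
  | appL u s' _ ih =>
    obtain ⟨E, s, rfl⟩ := ih
    exact ⟨(PCtx.appL .hole s').comp E, s, by rw [PCtx.comp_plug]; rfl⟩

theorem ShiftInPCtx.not_isValue {t : Tm} (h : ShiftInPCtx t) : ¬ IsValue t := by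
  rintro ⟨b, rfl⟩
  cases h

theorem ShiftInPCtx.of_ectx_plug {F : ECtx} {t : Tm} (h : ShiftInPCtx (F.plug t)) :
    IsValue t ∨ ShiftInPCtx t := by
  induction F generalizing t with
  | hole => exact .inr h
  | appV b F ih =>
    rcases ih h with hv | hs
    · exact absurd hv (by rintro ⟨_, ⟨⟩⟩)
    · cases hs with
      | appR _ _ hs => exact .inr hs
      | appL _ _ hs => cases hs
  | appL F s ih =>
    rcases ih h with hv | hs
    · exact absurd hv (by rintro ⟨_, ⟨⟩⟩)
    · cases hs with
      | appR b _ _ => exact .inl ⟨b, rfl⟩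
      | appL _ _ hs => exact .inr hs
  | resetC F ih =>
    rcases ih h with ⟨_, ⟨⟩⟩ | hs
    cases hs

theorem ShiftInPCtx.not_red {t u : Tm} (h : ShiftInPCtx t) : ¬ Red t u := by
  intro hred
  cases hred with
  | beta F b v hv =>
    rcases of_ectx_plug h with ⟨_, ⟨⟩⟩ | hs
    cases hs with
    | appR _ _ hs => exact hs.not_isValue hv
    | appL _ _ hs => cases hs
  | cap F E s => rcases of_ectx_plug h with ⟨_, ⟨⟩⟩ | hs; cases hs
  | res F v hv => rcases of_ectx_plug h with ⟨_, ⟨⟩⟩ | hs; cases hs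

def ECtx.comp : ECtx → ECtx → ECtx
  | F, .hole => F
  | F, .appV b F' => .appV b (F.comp F')
  | F, .appL F' s => .appL (F.comp F') s
  | F, .resetC F' => .resetC (F.comp F')

theorem ECtx.comp_plug (F F' : ECtx) (t : Tm) :
    (F.comp F').plug t = F.plug (F'.plug t) := by
  induction F' generalizing t with
  | hole => rfl
  | appV b F' ih => simp only [ECtx.comp, ECtx.plug, ih]
  | appL F' s ih => simp only [ECtx.comp, ECtx.plug, ih]
  | resetC F' ih => simp only [ECtx.comp, ECtx.plug, ih]

theorem Red.ectx_plug (F : ECtx) {t u : Tm} (h : Red t u) : Red (F.plug t) (F.plug u) := by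
  cases h with
  | beta F' b v hv => simpa only [ECtx.comp_plug] using Red.beta (F.comp F') b v hv
  | cap F' E s => simpa only [ECtx.comp_plug] using Red.cap (F.comp F') E s
  | res F' v hv => simpa only [ECtx.comp_plug] using Red.res (F.comp F') v hv

theorem progress {t : Tm} (ht : Closed t) :
    IsValue t ∨ ShiftInPCtx t ∨ ∃ u, Red t u := by
  induction t with
  | var m => exact absurd ht (Nat.not_lt_zero m)
  | lam b => exact .inl ⟨b, rfl⟩
  | shift s => exact .inr (.inl (.shift s))
  | app a b iha ihb =>
    obtain ⟨ha, hb⟩ := ht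
    rcases iha ha with ⟨a', rfl⟩ | hs | ⟨a', hred⟩
    · rcases ihb hb with hv | hs | ⟨b', hred⟩
      · exact .inr (.inr ⟨_, Red.beta .hole a' b hv⟩)
      · exact .inr (.inl (.appR _ _ hs))
      · exact .inr (.inr ⟨_, hred.ectx_plug (.appV a' .hole)⟩)
    · exact .inr (.inl (.appL _ _ hs))
    · exact .inr (.inr ⟨_, hred.ectx_plug (.appL .hole b)⟩)
  | reset u ih =>
    rcases ih ht with hv | hs | ⟨u', hred⟩
    · exact .inr (.inr ⟨_, Red.res .hole u hv⟩)
    · obtain ⟨E, s, rfl⟩ := shiftInPCtx_iff.mp hs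
      exact .inr (.inr ⟨_, Red.cap .hole E s⟩)
    · exact .inr (.inr ⟨_, hred.ectx_plug (.resetC .hole)⟩)

end LamS
open LamS LamS.Tm in
/-- a closed term is stuck iff it is of the form E[Sk.s]. -/
theorem stuck_characterization :
    ∀ t : Tm, Closed t → (Stuck t ↔ ∃ (E : PCtx) (s : Tm), t = E.plug (shift s)) := by
  intro t ht
  rw [← shiftInPCtx_iff]
  constructor
  · rintro ⟨hnv, hnr⟩
    rcases progress ht with hv | hs | ⟨u, hred⟩
    · exact absurd hv hnv
    · exact hs
    · exact absurd hred (hnr u)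
  · intro hs
    exact ⟨hs.not_isValue, fun _ => hs.not_red⟩
end

section
/- If t →τ t' in the LTS for λ_S, then t and t' are applicative bisimilar, i.e., the relation {(t, t') : t →τ t'} is contained in applicative bisimilarity ≈. -/
/-! A term with a τ-transition has no other transition, and its τ-transition is unique: the LTS is
deterministic and τ-steps exclude visible ones. So τ-steps can be matched by doing nothing, and the
symmetric closure of `→τ*` is a bisimulation: whichever side is ahead in the τ-sequence either
waits for the other, or performs the same τ-step. -/

namespace LamS

open Tm

lemma Step.lam_label {b u : Tm} {l : Label} (h : Step (lam b) l u) : ∃ v, l = .val v := by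
  cases h
  exact ⟨_, rfl⟩

lemma Step.eq_tau_iff {t u₁ u₂ : Tm} {l₁ l₂ : Label} (h₁ : Step t l₁ u₁) (h₂ : Step t l₂ u₂) :
    l₁ = .tau ↔ l₂ = .tau := by
  induction t generalizing l₁ l₂ u₁ u₂ with
  | var _ => cases h₁
  | lam _ | shift _ => cases h₁; cases h₂; simp
  | app _ _ _ _ | reset _ _ => cases h₁ <;> cases h₂ <;> grind [Step.lam_label, IsValue]

lemma Step.deterministic {t u₁ u₂ : Tm} {l : Label} (h₁ : Step t l u₁) (h₂ : Step t l u₂) :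
    u₁ = u₂ := by
  induction t generalizing l u₁ u₂ with
  | var _ => cases h₁
  | lam _ | shift _ => cases h₁; cases h₂; rfl
  | app _ _ _ _ | reset _ _ =>
    cases h₁ <;> cases h₂ <;> grind [Step.lam_label, IsValue, Step.eq_tau_iff]

lemma Step.tau_unique {t u u' : Tm} {l : Label} (h : Step t .tau u) (h' : Step t l u') :
    l = .tau ∧ u' = u := by
  obtain rfl : l = .tau := (h.eq_tau_iff h').1 rfl
  exact ⟨rfl, h'.deterministic h⟩

lemma Weak.of_tauStar_step {t u t' : Tm} {l : Label} (htu : TauStar t u) (h : Step u l t') :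
    Weak t l t' := by
  cases l with
  | tau => exact htu.tail h
  | val _ | ctx _ => exact ⟨u, htu, h⟩

lemma IsSim.isBisim {R : Tm → Tm → Prop} [Std.Symm R] (hR : IsSim R) : IsBisim R :=
  ⟨hR, fun _ _ h _ _ hs =>
    (hR (symm_of R h) hs).imp fun _ ⟨hw, hr⟩ => ⟨hw, symm_of R hr⟩⟩

lemma isSim_symmGen_tauStar : IsSim (Relation.SymmGen TauStar) := by
  rintro t₀ t₁ (h | h) l t₀' hstep
  · rcases h.cases_head with rfl | ⟨u, htu, hut₁⟩
    · exact ⟨t₀', .of_tauStar_step .refl hstep, .of_rel .refl⟩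
    · obtain ⟨rfl, rfl⟩ := htu.tau_unique hstep
      exact ⟨t₁, (.refl : TauStar t₁ t₁), .of_rel hut₁⟩
  · exact ⟨t₀', .of_tauStar_step h hstep, .of_rel .refl⟩

theorem bisim_of_tauStar {t t' : Tm} (h : TauStar t t') : Bisim t t' :=
  ⟨_, isSim_symmGen_tauStar.isBisim, .of_rel h⟩

end LamS

open LamS LamS.Tm in
/-- internal steps are included in applicative bisimilarity. -/
theorem tau_step_bisim :
    ∀ t t' : Tm, Closed t → Step t Label.tau t' → Bisim t t' :=
  fun _ _ _ h => bisim_of_tauStar (.single h)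
end

section
/- Applicative bisimilarity coincides with big-step applicative bisimilarity on closed terms of λ_S: ≈ = ≈_bs. -/
namespace LamS

open Tm

/-! τ-transitions are deterministic and a term with a τ-transition has no other transition.
Hence a visible weak transition of a term is also a weak transition of each of its τ-derivatives,
so the τ-closure of a big-step bisimulation is a bisimulation; conversely every bisimulation
simulates weak transitions and is therefore a big-step bisimulation. -/

theorem Step.not_lam_tau {b u : Tm} : ¬ Step (lam b) .tau u := nofun

theorem Step.not_lam_ctx {b u : Tm} {E : PCtx} : ¬ Step (lam b) (.ctx E) u := nofun

theorem Step.det {t u u' : Tm} {l l' : Label} (h : Step t l u) (h' : Step t l' u')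
    (hl : l = .tau ∨ l' = .tau ∨ l = l') : l = l' ∧ u = u' := by
  induction h generalizing l' u' <;> cases h' <;>
    grind [IsValue, Step.not_lam_tau, Step.not_lam_ctx]

theorem Step.tau_rightUnique : Relator.RightUnique (fun a b => Step a .tau b) :=
  fun _ _ _ h h' => (h.det h' (.inl rfl)).2

theorem weak_iff_of_ne_tau {t t' : Tm} {l : Label} (hl : l ≠ .tau) :
    Weak t l t' ↔ ∃ u, TauStar t u ∧ Step u l t' := by
  cases l
  · exact absurd rfl hl
  all_goals rfl

theorem Weak.tauStar_left {a b c : Tm} {l : Label} (h : TauStar a b) (hw : Weak b l c) :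
    Weak a l c := by
  by_cases hl : l = .tau
  · subst hl
    exact h.trans hw
  · obtain ⟨u, hu, hs⟩ := (weak_iff_of_ne_tau hl).1 hw
    exact (weak_iff_of_ne_tau hl).2 ⟨u, h.trans hu, hs⟩

theorem TauStar.of_tauStar_of_step {a0 a w x : Tm} {l : Label} (hl : l ≠ .tau)
    (ha : TauStar a0 a) (hw : TauStar a0 w) (hs : Step w l x) : TauStar a w := by
  rcases Relation.ReflTransGen.total_of_right_unique Step.tau_rightUnique ha hw with h | h
  · exact h
  · rcases h.cases_head with rfl | ⟨c, hc, -⟩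
    · exact .refl
    · exact absurd (hc.det hs (.inl rfl)).1.symm hl

theorem Weak.of_tauStar {a0 a x : Tm} {l : Label} (hl : l ≠ .tau) (hw : Weak a0 l x)
    (ha : TauStar a0 a) : Weak a l x := by
  obtain ⟨w, hw, hs⟩ := (weak_iff_of_ne_tau hl).1 hw
  exact (weak_iff_of_ne_tau hl).2 ⟨w, TauStar.of_tauStar_of_step hl ha hw hs, hs⟩

section Simulation

variable {R : Tm → Tm → Prop}

theorem IsSim.tauStar (hR : IsSim R) {t0 t1 u : Tm} (hr : R t0 t1) (h : TauStar t0 u) :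
    ∃ u1, TauStar t1 u1 ∧ R u u1 := by
  induction h with
  | refl => exact ⟨t1, .refl, hr⟩
  | tail _ hs ih =>
    obtain ⟨u1, hu1, hr1⟩ := ih
    obtain ⟨u2, hu2, hr2⟩ := hR hr1 hs
    exact ⟨u2, hu1.trans hu2, hr2⟩

theorem IsSim.weak (hR : IsSim R) {t0 t1 t0' : Tm} {l : Label} (hr : R t0 t1)
    (h : Weak t0 l t0') : ∃ t1', Weak t1 l t1' ∧ R t0' t1' := by
  by_cases hl : l = .tau
  · subst hl
    exact hR.tauStar hr h
  · obtain ⟨u, hu, hs⟩ := (weak_iff_of_ne_tau hl).1 h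
    obtain ⟨u1, hu1, hr1⟩ := hR.tauStar hr hu
    obtain ⟨t1', hw, hr'⟩ := hR hr1 hs
    exact ⟨t1', hw.tauStar_left hu1, hr'⟩

theorem IsSim.isBigSim (hR : IsSim R) : IsBigSim R :=
  fun _ _ hr _ _ _ h => hR.weak hr h

theorem IsBisim.isBigBisim (hR : IsBisim R) : IsBigBisim R :=
  ⟨hR.1.isBigSim, hR.2.isBigSim⟩

def tauClosure (R : Tm → Tm → Prop) (a b : Tm) : Prop :=
  ∃ a0 b0, TauStar a0 a ∧ TauStar b0 b ∧ R a0 b0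

theorem tauClosure_flip (R : Tm → Tm → Prop) : tauClosure (flip R) = flip (tauClosure R) := by
  funext a b
  exact propext ⟨fun ⟨b0, a0, hb, ha, hr⟩ => ⟨a0, b0, ha, hb, hr⟩,
    fun ⟨a0, b0, ha, hb, hr⟩ => ⟨b0, a0, hb, ha, hr⟩⟩

theorem IsBigSim.isSim_tauClosure (hR : IsBigSim R) : IsSim (tauClosure R) := by
  rintro a b ⟨a0, b0, ha, hb, hr⟩ l a' hs
  by_cases hl : l = .tau
  · subst hl
    exact ⟨b, Relation.ReflTransGen.refl, a0, b0, ha.tail hs, hb, hr⟩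
  · obtain ⟨b', hw, hr'⟩ := hR hr hl ((weak_iff_of_ne_tau hl).2 ⟨a, ha, hs⟩)
    exact ⟨b', hw.of_tauStar hl hb, a', b', .refl, .refl, hr'⟩

theorem IsBigBisim.isBisim_tauClosure (hR : IsBigBisim R) : IsBisim (tauClosure R) :=
  ⟨hR.1.isSim_tauClosure, tauClosure_flip R ▸ hR.2.isSim_tauClosure⟩

end Simulation

end LamS
open LamS LamS.Tm in
/-- applicative bisimilarity coincides with big-step applicative
    bisimilarity on closed terms. -/
theorem bisim_eq_bigBisim :
    ∀ t0 t1 : Tm, Closed t0 → Closed t1 → (Bisim t0 t1 ↔ BigBisim t0 t1) := by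
  intro t0 t1 _ _
  constructor
  · rintro ⟨R, hR, h⟩
    exact ⟨R, hR.isBigBisim, h⟩
  · rintro ⟨R, hR, h⟩
    exact ⟨tauClosure R, hR.isBisim_tauClosure, t0, t1, .refl, .refl, h⟩
end

section
/- Howe's closure of applicative bisimilarity for λ_S is substitutive: if t0 H t1 and v0 H v1 (H being Howe's closure), then t0{v0/x} H t1{v1/x}. -/
/-!
Induction on the derivation of `t0 H t1`. The compatibility rules commute with substitution;
at a variable, `v0` and `v1` are inserted lifted, and `H` is stable under lifting. For the rules
ending in `≈°`, the open extension of any relation is stable under substituting a value: a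
closing substitution `σ` after `t{v/j}` is `σ` extended at `j` by `v` closed under `σ`. In the
base rule `t0 ≈° t1` one first gets `t0{v0/j} H t0{v1/j}` by induction on `t0`, and then
continues along `≈°`.
-/

namespace LamS
open Tm

theorem closedUnder_liftT (t : Tm) (c : ℕ) {k d : ℕ} (h : ClosedUnder k t) :
    ClosedUnder (k + d) (liftT d c t) := by
  induction t generalizing c k with
  | var n =>
    simp only [liftT]
    split <;> (simp only [ClosedUnder] at h ⊢; omega)
  | lam t ih | shift t ih =>
    simpa only [liftT, ClosedUnder, Nat.add_right_comm] using ih (c + 1) h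
  | app a b iha ihb => exact ⟨iha c h.1, ihb c h.2⟩
  | reset t ih => exact ih c h

theorem closedUnder_applySub (t : Tm) {σ : ℕ → Tm} {k : ℕ} (h : ∀ n, ClosedUnder k (σ n)) :
    ClosedUnder k (applySub σ t) := by
  induction t generalizing σ k with
  | var n => exact h n
  | lam t ih | shift t ih =>
    refine ih fun n => ?_
    cases n with
    | zero => exact Nat.succ_pos k
    | succ n => exact closedUnder_liftT (σ n) 0 (h n)
  | app a b iha ihb => exact ⟨iha h, ihb h⟩
  | reset t ih => exact ih h

theorem liftT_liftT_comm (t : Tm) {c c' d e : ℕ} (h : c' ≤ c) :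
    liftT d (c + e) (liftT e c' t) = liftT e c' (liftT d c t) := by
  induction t generalizing c c' with
  | var n =>
    simp only [liftT]
    split_ifs <;> simp only [liftT] <;> split_ifs <;> first | rfl | omega | (congr 1; omega)
  | lam t ih | shift t ih =>
    simp only [liftT, ← ih (Nat.succ_le_succ h), Nat.succ_add]
  | app a b iha ihb => simp only [liftT, iha h, ihb h]
  | reset t ih => simp only [liftT, ih h]

theorem liftT_liftSub (ρ : ℕ → Tm) (c d : ℕ) :
    (fun n => liftT d (c + 1) (liftSub ρ n)) = liftSub (fun n => liftT d c (ρ n)) := by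
  funext n
  cases n with
  | zero => simp [liftSub, liftT]
  | succ n => exact liftT_liftT_comm (ρ n) (Nat.zero_le c)

theorem liftT_applySub (t : Tm) (ρ : ℕ → Tm) (c d : ℕ) :
    liftT d c (applySub ρ t) = applySub (fun n => liftT d c (ρ n)) t := by
  induction t generalizing ρ c with
  | var n => rfl
  | lam t ih | shift t ih => simp only [applySub, liftT, ih, liftT_liftSub]
  | app a b iha ihb => simp only [applySub, liftT, iha, ihb]
  | reset t ih => simp only [applySub, liftT, ih]

/-- The substitution `σ` after `liftT d c`. -/
def skipSub (σ : ℕ → Tm) (c d : ℕ) : ℕ → Tm := fun n => if n < c then σ n else σ (n + d)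

theorem liftSub_skipSub (σ : ℕ → Tm) (c d : ℕ) :
    liftSub (skipSub σ c d) = skipSub (liftSub σ) (c + 1) d := by
  funext n
  cases n with
  | zero => simp [liftSub, skipSub]
  | succ n =>
    by_cases h : n < c
    · simp [liftSub, skipSub, h]
    · simp [liftSub, skipSub, h, Nat.add_right_comm n 1 d]

theorem applySub_liftT (t : Tm) (σ : ℕ → Tm) (c d : ℕ) :
    applySub σ (liftT d c t) = applySub (skipSub σ c d) t := by
  induction t generalizing σ c with
  | var n => simp only [liftT]; split <;> simp [applySub, skipSub, *]
  | lam t ih | shift t ih => simp only [liftT, applySub, ih, liftSub_skipSub]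
  | app a b iha ihb => simp only [liftT, applySub, iha, ihb]
  | reset t ih => simp only [liftT, applySub, ih]

theorem ClosingSub.skipSub {σ : ℕ → Tm} (h : ClosingSub σ) (c d : ℕ) :
    ClosingSub (skipSub σ c d) := by
  intro n
  unfold LamS.skipSub
  split <;> exact h _

/-- The substitution `σ` after `{v/j}`. -/
def consSub (σ : ℕ → Tm) (j : ℕ) (v : Tm) : ℕ → Tm := fun n =>
  if n < j then σ n else if n = j then applySub (fun m => σ (m + j)) v else σ (n - 1)

theorem liftSub_consSub (σ : ℕ → Tm) (j : ℕ) (v : Tm) :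
    liftSub (consSub σ j v) = consSub (liftSub σ) (j + 1) v := by
  funext n
  cases n with
  | zero => simp [liftSub, consSub]
  | succ n =>
    rcases lt_trichotomy n j with h | rfl | h
    · simp [liftSub, consSub, h]
    · simp [liftSub, consSub, liftT_applySub]
    · obtain ⟨k, rfl⟩ : ∃ k, n = k + 1 := ⟨n - 1, by omega⟩
      simp [liftSub, consSub, h.ne', not_lt_of_gt h]

theorem applySub_substT (t : Tm) (σ : ℕ → Tm) (j : ℕ) (v : Tm) :
    applySub σ (substT j v t) = applySub (consSub σ j v) t := by
  induction t generalizing σ j with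
  | var n =>
    rcases lt_trichotomy n j with h | rfl | h
    · simp [substT, consSub, h, h.ne, not_lt_of_gt h, applySub]
    · have hskip : skipSub σ 0 n = fun m => σ (m + n) := by
        funext m; simp [skipSub]
      simp [substT, consSub, applySub, applySub_liftT, hskip]
    · simp [substT, consSub, h, h.ne', not_lt_of_gt h, applySub]
  | lam t ih | shift t ih => simp only [substT, applySub, ih, liftSub_consSub]
  | app a b iha ihb => simp only [substT, applySub, iha, ihb]
  | reset t ih => simp only [substT, applySub, ih]

theorem ClosingSub.consSub {σ : ℕ → Tm} (hσ : ClosingSub σ) (j : ℕ) {v : Tm}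
    (hv : IsValue v) : ClosingSub (consSub σ j v) := by
  intro n
  unfold LamS.consSub
  split_ifs
  · exact hσ n
  · obtain ⟨b, rfl⟩ := hv
    exact ⟨⟨_, rfl⟩, closedUnder_applySub _ fun m => (hσ _).2⟩
  · exact hσ _

namespace OpenExt

variable {R : Tm → Tm → Prop} {t0 t1 : Tm}

theorem liftT (h : OpenExt R t0 t1) (c d : ℕ) :
    OpenExt R (liftT d c t0) (liftT d c t1) := by
  intro σ hσ
  rw [applySub_liftT, applySub_liftT]
  exact h _ (hσ.skipSub c d)

theorem substT (h : OpenExt R t0 t1) {v : Tm} (hv : IsValue v) (j : ℕ) :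
    OpenExt R (substT j v t0) (substT j v t1) := by
  intro σ hσ
  rw [applySub_substT, applySub_substT]
  exact h _ (hσ.consSub j hv)

end OpenExt

namespace Howe

variable {t0 t1 v0 v1 : Tm}

theorem liftT (h : Howe t0 t1) (d c : ℕ) : Howe (liftT d c t0) (liftT d c t1) := by
  induction h generalizing c with
  | base h => exact base (h.liftT c d)
  | right _ h2 ih => exact right (ih c) (h2.liftT c d)
  | compVar n => simp only [LamS.liftT]; split <;> exact compVar _
  | compLam _ ih => exact compLam (ih (c + 1))
  | compApp _ _ iha ihb => exact compApp (iha c) (ihb c)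
  | compShift _ ih => exact compShift (ih (c + 1))
  | compReset _ ih => exact compReset (ih c)

theorem substT_var (hv : Howe v0 v1) (j n : ℕ) :
    Howe (substT j v0 (var n)) (substT j v1 (var n)) := by
  simp only [LamS.substT]
  split_ifs
  · exact hv.liftT j 0
  all_goals exact compVar _

theorem substT_congr (hv : Howe v0 v1) (t : Tm) (j : ℕ) :
    Howe (substT j v0 t) (substT j v1 t) := by
  induction t generalizing j with
  | var n => exact hv.substT_var j n
  | lam t ih => exact compLam (ih (j + 1))
  | app a b iha ihb => exact compApp (iha j) (ihb j)
  | shift t ih => exact compShift (ih (j + 1))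
  | reset t ih => exact compReset (ih j)

theorem substT (h : Howe t0 t1) (hv : Howe v0 v1) (hv1 : IsValue v1) (j : ℕ) :
    Howe (substT j v0 t0) (substT j v1 t1) := by
  induction h generalizing j with
  | @base t0 _ h => exact right (hv.substT_congr t0 j) (h.substT hv1 j)
  | right _ h2 ih => exact right (ih j) (h2.substT hv1 j)
  | compVar n => exact hv.substT_var j n
  | compLam _ ih => exact compLam (ih (j + 1))
  | compApp _ _ iha ihb => exact compApp (iha j) (ihb j)
  | compShift _ ih => exact compShift (ih (j + 1))
  | compReset _ ih => exact compReset (ih j)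

end Howe

end LamS
open LamS LamS.Tm in
/-- Howe's closure is substitutive. -/
theorem howe_substitutive :
    ∀ t0 t1 v0 v1 : Tm, Howe t0 t1 → Howe v0 v1 → IsValue v0 → IsValue v1 →
      ∀ j : ℕ, Howe (substT j v0 t0) (substT j v1 t1) :=
  fun _ _ _ _ h hv _ hv1 j => h.substT hv hv1 j
end

section
/- The transitive closure of Howe's closure of applicative bisimilarity for λ_S, restricted appropriately, is symmetric: (H)* is a symmetric relation. -/
/-! Applicative bisimilarity is symmetric, hence so is its open extension, and Howe's closure
contains that open extension. So every Howe step can be walked backwards inside `(H)*`: a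
`≈°` step or the trailing `≈°` of `H;≈°` reverses to a single Howe step, and a compatibility step
reverses componentwise because `(H)*` is compatible, `H` being reflexive. -/

theorem Relation.ReflTransGen.symm_of_le_swap {α : Type*} {r : α → α → Prop}
    (h : r ≤ Function.swap (ReflTransGen r)) {a b : α} (hab : ReflTransGen r a b) :
    ReflTransGen r b a :=
  reflTransGen_swap.mp <|
    reflTransGen_closed (fun _ _ hr => reflTransGen_swap.mpr (h _ _ hr)) _ _ hab

namespace LamS
open Tm Relation

theorem Bisim.symm {t0 t1 : Tm} : Bisim t0 t1 → Bisim t1 t0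
  | ⟨R, ⟨hR, hR'⟩, h⟩ => ⟨flip R, ⟨hR', hR⟩, h⟩

theorem OpenExt.symm {R : Tm → Tm → Prop} (hR : ∀ ⦃t0 t1⦄, R t0 t1 → R t1 t0) {t0 t1 : Tm}
    (h : OpenExt R t0 t1) : OpenExt R t1 t0 :=
  fun σ hσ => hR (h σ hσ)

theorem Howe.refl : ∀ t : Tm, Howe t t
  | var n => .compVar n
  | lam t => .compLam (Howe.refl t)
  | app a b => .compApp (Howe.refl a) (Howe.refl b)
  | shift t => .compShift (Howe.refl t)
  | reset t => .compReset (Howe.refl t)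

theorem reflTransGen_howe_app {a0 a1 b0 b1 : Tm} (ha : ReflTransGen Howe a0 a1)
    (hb : ReflTransGen Howe b0 b1) : ReflTransGen Howe (app a0 b0) (app a1 b1) :=
  (ha.lift (app · b0) fun _ _ h => .compApp h (Howe.refl b0)).trans
    (hb.lift (app a1) fun _ _ => .compApp (Howe.refl a1))

theorem Howe.reflTransGen_swap {t0 t1 : Tm} (h : Howe t0 t1) : ReflTransGen Howe t1 t0 := by
  induction h with
  | base h => exact .single (.base (h.symm @Bisim.symm))
  | right _ h ih => exact ih.head (.base (h.symm @Bisim.symm))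
  | compVar _ => exact .refl
  | compLam _ ih => exact ih.lift lam fun _ _ => .compLam
  | compApp _ _ iha ihb => exact reflTransGen_howe_app iha ihb
  | compShift _ ih => exact ih.lift shift fun _ _ => .compShift
  | compReset _ ih => exact ih.lift reset fun _ _ => .compReset

end LamS

open LamS LamS.Tm in
/-- the (reflexive-)transitive closure of Howe's closure is symmetric. -/
theorem howe_star_symmetric :
    ∀ t0 t1 : Tm, Relation.ReflTransGen Howe t0 t1 → Relation.ReflTransGen Howe t1 t0 :=
  fun _ _ => Relation.ReflTransGen.symm_of_le_swap fun _ _ => Howe.reflTransGen_swap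
end
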